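/- Let Δ⁺ be the positive roots of a reduced irreducible root system with simple roots Π, and let w be an element of the Weyl group. A subset M ⊆ Δ⁺ equals the inversion set N(w) = {γ ∈ Δ⁺ : w(γ) ∈ −Δ⁺} for some Weyl group element w if and only if both M and Δ⁺ \ M are closed under addition of roots (i.e., if γ₁, γ₂ lie in the subset and γ₁ + γ₂ is a root, then γ₁ + γ₂ lies in the subset). -/

import Mathlib

variable {V : Type*} [NormedAddCommGroup V] [InnerProductSpace ℝ V]

/-- Data of a reduced crystallographic root system `Δ` in a Euclidean space, together with a
choice of positive system `Δ⁺` and the corresponding simple roots `Π`. -/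
structure RootSystemData (V : Type*) [NormedAddCommGroup V] [InnerProductSpace ℝ V] where
  roots : Finset V
  pos : Finset V
  simples : Finset V
  zero_not_mem : (0 : V) ∉ roots
  neg_mem : ∀ γ ∈ roots, -γ ∈ roots
  reduced : ∀ γ ∈ roots, ∀ c : ℝ, c • γ ∈ roots → c = 1 ∨ c = -1
  crystallographic : ∀ γ ∈ roots, ∀ δ ∈ roots,
    ∃ n : ℤ, 2 * (inner ℝ γ δ : ℝ) / (inner ℝ δ δ : ℝ) = (n : ℝ)
  reflect_mem : ∀ γ ∈ roots, ∀ δ ∈ roots,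
    γ - (2 * (inner ℝ γ δ : ℝ) / (inner ℝ δ δ : ℝ)) • δ ∈ roots
  pos_subset : pos ⊆ roots
  pos_or_neg : ∀ γ ∈ roots, γ ∈ pos ∨ -γ ∈ pos
  pos_neg_disjoint : ∀ γ ∈ pos, -γ ∉ pos
  simples_subset : simples ⊆ pos
  simples_indep : LinearIndependent ℝ (fun α : {x // x ∈ simples} => (α : V))
  pos_combo : ∀ γ ∈ pos, ∃ c : V → ℕ, γ = ∑ α ∈ simples, (c α : ℝ) • α

/-- Irreducibility: the roots admit no partition into two nonempty mutually orthogonal parts. -/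
def RootSystemData.Irreducible (R : RootSystemData V) : Prop :=
  ∀ A B : Set V, A ∪ B = ↑R.roots → Disjoint A B →
    (∀ a ∈ A, ∀ b ∈ B, (inner ℝ a b : ℝ) = 0) → A = ∅ ∨ B = ∅

/-- The reflection in the hyperplane orthogonal to `δ`. -/
noncomputable def reflAt (δ : V) : Function.End V :=
  fun x => x - (2 * (inner ℝ x δ : ℝ) / (inner ℝ δ δ : ℝ)) • δ

/-- The Weyl group, generated by the reflections in the roots (each reflection is an
involution, so the closure as a monoid of endomorphisms coincides with the generated group). -/
def weylGroup (R : RootSystemData V) : Submonoid (Function.End V) :=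
  Submonoid.closure {f | ∃ δ ∈ R.roots, f = reflAt δ}

/-- The inversion set `N(w) = {γ ∈ Δ⁺ : w(γ) < 0}`. -/
def invSet (R : RootSystemData V) (w : Function.End V) : Set V :=
  {γ | γ ∈ R.pos ∧ -(w γ) ∈ R.pos}

/-- The pairing `(γ, θ∨) = 2(γ,θ)/(θ,θ)`. -/
noncomputable def copair (θ γ : V) : ℝ := 2 * (inner ℝ γ θ : ℝ) / (inner ℝ θ θ : ℝ)

/-- `μ ≤ γ` iff `γ − μ` is a nonnegative integer combination of the simple roots lying in
the subset `Z`. -/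
def rootLEon (simples : Finset V) (Z : Set V) (μ γ : V) : Prop :=
  ∃ c : V → ℕ, (∀ α, α ∉ Z → c α = 0) ∧ γ = μ + ∑ α ∈ simples, (c α : ℝ) • α

/-- A subset `S ⊆ Δ⁺` is closed if `γ₁, γ₂ ∈ S` and `γ₁ + γ₂ ∈ Δ` imply `γ₁ + γ₂ ∈ S`. -/
def IsClosedSub (R : RootSystemData V) (S : Set V) : Prop :=
  ∀ γ₁ ∈ S, ∀ γ₂ ∈ S, γ₁ + γ₂ ∈ R.roots → γ₁ + γ₂ ∈ S

/-! For `w` in the Weyl group, `w` is additive and permutes the roots, and a root that is a sum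
of two positive roots is positive; this gives closedness of `N(w)` and of `Δ⁺ \ N(w)`.

Conversely, induct on `|M|`. Closedness of `Δ⁺ \ M` puts a simple root `α` in `M`: an element
of `M` of minimal height that is not simple splits as `α + (γ - α)` with both summands positive
of smaller height. The simple reflection `s_α` permutes `Δ⁺ \ {α}`, so
`M' = s_α (M \ {α})` again has both closedness properties, `M' = N(w')` by induction, and
`N(w' s_α) = {α} ∪ s_α N(w') = M`. -/

open scoped InnerProductSpace

lemma reflAt_apply (δ x : V) : reflAt δ x = x - copair δ x • δ := rfl

lemma reflAt_add (δ x y : V) : reflAt δ (x + y) = reflAt δ x + reflAt δ y := by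
  simp only [reflAt_apply, copair, inner_add_left, mul_add, add_div, add_smul]
  abel

lemma reflAt_self {δ : V} (hδ : δ ≠ 0) : reflAt δ δ = -δ := by
  have h : copair δ δ = 2 := by
    rw [copair, mul_div_assoc, div_self (inner_self_ne_zero.mpr hδ), mul_one]
  rw [reflAt_apply, h, two_smul]
  abel

lemma reflAt_involutive {δ : V} (hδ : δ ≠ 0) : Function.Involutive (reflAt δ) := by
  intro x
  have h : copair δ (reflAt δ x) = -copair δ x := by
    simp only [copair, reflAt_apply, inner_sub_left, real_inner_smul_left]
    field_simp [inner_self_ne_zero.mpr hδ]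
    ring
  rw [reflAt_apply, h, reflAt_apply, neg_smul]
  abel

namespace RootSystemData

variable (R : RootSystemData V) {α : V} {M : Set V}

lemma ne_zero_of_mem_roots {γ : V} (hγ : γ ∈ R.roots) : γ ≠ 0 :=
  fun h => R.zero_not_mem (h ▸ hγ)

lemma ne_zero_of_mem_pos {γ : V} (hγ : γ ∈ R.pos) : γ ≠ 0 :=
  R.ne_zero_of_mem_roots (R.pos_subset hγ)

lemma coeff_eq_of_sum_eq {f g : V → ℝ}
    (h : ∑ α ∈ R.simples, f α • α = ∑ α ∈ R.simples, g α • α) :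
    ∀ α ∈ R.simples, f α = g α := by
  intro α hα
  have hzero : ∑ i : R.simples, (f i - g i) • (i : V) = 0 := by
    rw [Finset.sum_coe_sort R.simples fun a => (f a - g a) • a]
    simp only [sub_smul, Finset.sum_sub_distrib, h, sub_self]
  exact sub_eq_zero.mp (Fintype.linearIndependent_iff.mp R.simples_indep _ hzero ⟨α, hα⟩)

lemma add_mem_pos {γ₁ γ₂ : V} (h₁ : γ₁ ∈ R.pos) (h₂ : γ₂ ∈ R.pos)
    (h : γ₁ + γ₂ ∈ R.roots) : γ₁ + γ₂ ∈ R.pos := by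
  refine (R.pos_or_neg _ h).resolve_right fun hneg => R.ne_zero_of_mem_pos h₁ ?_
  obtain ⟨c₁, hc₁⟩ := R.pos_combo γ₁ h₁
  obtain ⟨c₂, hc₂⟩ := R.pos_combo γ₂ h₂
  obtain ⟨c₃, hc₃⟩ := R.pos_combo _ hneg
  -- `γ₁ + γ₂ + (-(γ₁ + γ₂)) = 0` has nonnegative coefficients, so all of them vanish
  have hsum : ∑ α ∈ R.simples, ((c₁ α + c₂ α + c₃ α : ℕ) : ℝ) • α
      = ∑ α ∈ R.simples, (0 : ℝ) • α := by
    simp only [Nat.cast_add, add_smul, Finset.sum_add_distrib, ← hc₁, ← hc₂, ← hc₃,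
      zero_smul, Finset.sum_const_zero]
    abel
  rw [hc₁]
  refine Finset.sum_eq_zero fun α hα => ?_
  have : c₁ α + c₂ α + c₃ α = 0 := by exact_mod_cast R.coeff_eq_of_sum_eq hsum α hα
  simp [show c₁ α = 0 by omega]

open Classical in
noncomputable def ht (γ : V) : ℕ :=
  if h : γ ∈ R.pos then ∑ α ∈ R.simples, (R.pos_combo γ h).choose α else 0

lemma ht_eq_sum {γ : V} (hγ : γ ∈ R.pos) {c : V → ℕ}
    (hc : γ = ∑ α ∈ R.simples, (c α : ℝ) • α) :
    R.ht γ = ∑ α ∈ R.simples, c α := by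
  rw [ht, dif_pos hγ]
  refine Finset.sum_congr rfl fun α hα => ?_
  exact_mod_cast R.coeff_eq_of_sum_eq ((R.pos_combo γ hγ).choose_spec.symm.trans hc) α hα

lemma ht_add {γ₁ γ₂ : V} (h₁ : γ₁ ∈ R.pos) (h₂ : γ₂ ∈ R.pos) (h : γ₁ + γ₂ ∈ R.pos) :
    R.ht (γ₁ + γ₂) = R.ht γ₁ + R.ht γ₂ := by
  obtain ⟨c₁, hc₁⟩ := R.pos_combo γ₁ h₁
  obtain ⟨c₂, hc₂⟩ := R.pos_combo γ₂ h₂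
  have hc : γ₁ + γ₂ = ∑ α ∈ R.simples, ((c₁ α + c₂ α : ℕ) : ℝ) • α := by
    simp only [Nat.cast_add, add_smul, Finset.sum_add_distrib, ← hc₁, ← hc₂]
  rw [R.ht_eq_sum h hc, R.ht_eq_sum h₁ hc₁, R.ht_eq_sum h₂ hc₂, Finset.sum_add_distrib]

lemma one_le_ht {γ : V} (hγ : γ ∈ R.pos) : 1 ≤ R.ht γ := by
  obtain ⟨c, hc⟩ := R.pos_combo γ hγ
  rw [R.ht_eq_sum hγ hc, Nat.one_le_iff_ne_zero]
  intro h
  rw [Finset.sum_eq_zero_iff] at h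
  exact R.ne_zero_of_mem_pos hγ (hc.trans (Finset.sum_eq_zero fun α hα => by simp [h α hα]))

lemma ht_simple (hα : α ∈ R.simples) : R.ht α = 1 := by
  classical
  have hc : α = ∑ β ∈ R.simples, ((if β = α then 1 else 0 : ℕ) : ℝ) • β := by
    simp [ite_smul, Finset.sum_ite_eq', hα]
  rw [R.ht_eq_sum (R.simples_subset hα) hc]
  simp [Finset.sum_ite_eq', hα]

lemma reflAt_mem_roots {γ δ : V} (hγ : γ ∈ R.roots) (hδ : δ ∈ R.roots) :
    reflAt δ γ ∈ R.roots :=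
  R.reflect_mem γ hγ δ hδ

lemma reflAt_mem_weylGroup {δ : V} (hδ : δ ∈ R.roots) : reflAt δ ∈ weylGroup R :=
  Submonoid.subset_closure ⟨δ, hδ, rfl⟩

lemma map_add_of_mem_weylGroup {w : Function.End V} (hw : w ∈ weylGroup R) (x y : V) :
    w (x + y) = w x + w y := by
  induction hw using Submonoid.closure_induction generalizing x y with
  | mem f hf =>
    obtain ⟨δ, -, rfl⟩ := hf
    exact reflAt_add δ x y
  | one => rfl
  | mul f g _ _ hf hg =>
    change f (g (x + y)) = f (g x) + f (g y)
    rw [hg, hf]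

lemma map_neg_of_mem_weylGroup {w : Function.End V} (hw : w ∈ weylGroup R) (x : V) :
    w (-x) = -w x :=
  (AddMonoidHom.mk' w (R.map_add_of_mem_weylGroup hw)).map_neg x

lemma map_mem_roots_of_mem_weylGroup {w : Function.End V} (hw : w ∈ weylGroup R)
    {γ : V} (hγ : γ ∈ R.roots) : w γ ∈ R.roots := by
  induction hw using Submonoid.closure_induction generalizing γ with
  | mem f hf =>
    obtain ⟨δ, hδ, rfl⟩ := hf
    exact R.reflAt_mem_roots hγ hδ
  | one => exact hγ
  | mul f g _ _ hf hg => exact hf (hg hγ)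

lemma inner_sq_lt_of_inner_pos {γ : V} (hγ : γ ∈ R.roots) (hα : α ∈ R.roots)
    (hpos : 0 < ⟪γ, α⟫_ℝ) (hne : γ ≠ α) : ⟪γ, α⟫_ℝ ^ 2 < ⟪γ, γ⟫_ℝ * ⟪α, α⟫_ℝ := by
  have hαn : 0 < ‖α‖ := norm_pos_iff.mpr (R.ne_zero_of_mem_roots hα)
  have hγn : 0 < ‖γ‖ := norm_pos_iff.mpr (R.ne_zero_of_mem_roots hγ)
  have hlt : ⟪γ, α⟫_ℝ < ‖γ‖ * ‖α‖ := by
    refine inner_lt_norm_mul_iff_real.mpr fun hpar => ?_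
    -- a positive multiple of a root is a root only if it is the root itself
    have hγα : γ = (‖γ‖ / ‖α‖) • α := by
      rw [div_eq_inv_mul, mul_smul, ← hpar, smul_smul, inv_mul_cancel₀ hαn.ne', one_smul]
    rcases R.reduced α hα _ (hγα ▸ hγ) with h | h
    · exact hne (by rw [hγα, h, one_smul])
    · linarith [div_pos hγn hαn]
  rw [real_inner_self_eq_norm_mul_norm, real_inner_self_eq_norm_mul_norm]
  nlinarith

lemma sub_mem_roots_of_inner_pos {γ : V} (hγ : γ ∈ R.roots) (hα : α ∈ R.roots)
    (hpos : 0 < ⟪γ, α⟫_ℝ) (hne : γ ≠ α) : γ - α ∈ R.roots := by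
  have hαα : 0 < ⟪α, α⟫_ℝ := real_inner_self_pos.mpr (R.ne_zero_of_mem_roots hα)
  have hγγ : 0 < ⟪γ, γ⟫_ℝ := real_inner_self_pos.mpr (R.ne_zero_of_mem_roots hγ)
  obtain ⟨p, hp⟩ := R.crystallographic γ hγ α hα
  obtain ⟨q, hq⟩ := R.crystallographic α hα γ hγ
  rw [real_inner_comm] at hq
  have hp0 : (0 : ℝ) < p := by rw [← hp]; positivity
  have hq0 : (0 : ℝ) < q := by rw [← hq]; positivity
  -- `p` and `q` are the Cartan integers of `γ` and `α`; strict Cauchy–Schwarz bounds their product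
  have hpq : (p : ℝ) * q < 4 := by
    rw [← hp, ← hq, div_mul_div_comm, div_lt_iff₀ (by positivity)]
    nlinarith [R.inner_sq_lt_of_inner_pos hγ hα hpos hne]
  have hpq' : p * q < 4 := by exact_mod_cast hpq
  have hp0' : 0 < p := by exact_mod_cast hp0
  have hq0' : 0 < q := by exact_mod_cast hq0
  have hone : p = 1 ∨ q = 1 := by
    by_contra! h
    nlinarith [show 2 ≤ p by omega, show 2 ≤ q by omega]
  rcases hone with rfl | rfl
  · have h := R.reflect_mem γ hγ α hα
    rwa [hp, Int.cast_one, one_smul] at h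
  · have h := R.neg_mem _ (R.reflect_mem α hα γ hγ)
    rwa [real_inner_comm, hq, Int.cast_one, one_smul, neg_sub] at h

lemma exists_simple_inner_pos {γ : V} (hγ : γ ∈ R.pos) :
    ∃ α ∈ R.simples, 0 < ⟪γ, α⟫_ℝ := by
  by_contra! h
  obtain ⟨c, hc⟩ := R.pos_combo γ hγ
  have hle : ⟪γ, γ⟫_ℝ ≤ 0 := by
    conv_lhs => arg 3; rw [hc]
    rw [inner_sum]
    exact Finset.sum_nonpos fun α hα => by
      rw [real_inner_smul_right]
      exact mul_nonpos_of_nonneg_of_nonpos (Nat.cast_nonneg _) (h α hα)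
  exact R.ne_zero_of_mem_pos hγ (real_inner_self_nonpos.mp hle)

lemma exists_simple_sub_mem_pos {γ : V} (hγ : γ ∈ R.pos) (hns : γ ∉ R.simples) :
    ∃ α ∈ R.simples, γ - α ∈ R.pos := by
  obtain ⟨α, hα, hin⟩ := R.exists_simple_inner_pos hγ
  have hαp := R.simples_subset hα
  have hsub := R.sub_mem_roots_of_inner_pos (R.pos_subset hγ) (R.pos_subset hαp) hin
    (fun h => hns (h ▸ hα))
  refine ⟨α, hα, (R.pos_or_neg _ hsub).resolve_right fun hneg => ?_⟩
  -- otherwise the simple root `α = γ + (α - γ)` would have height at least `2`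
  rw [neg_sub] at hneg
  have hht := R.ht_add hγ hneg (by rwa [add_sub_cancel])
  rw [add_sub_cancel, R.ht_simple hα] at hht
  linarith [R.one_le_ht hγ, R.one_le_ht hneg]

lemma reflAt_simple_mem_pos {γ : V} (hα : α ∈ R.simples) (hγ : γ ∈ R.pos) (hne : γ ≠ α) :
    reflAt α γ ∈ R.pos := by
  classical
  have hαr := R.pos_subset (R.simples_subset hα)
  refine (R.pos_or_neg _ (R.reflAt_mem_roots (R.pos_subset hγ) hαr)).resolve_right fun hneg => ?_
  obtain ⟨c, hc⟩ := R.pos_combo γ hγ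
  obtain ⟨d, hd⟩ := R.pos_combo _ hneg
  -- by reducedness `γ` has a positive coefficient at some simple root `β ≠ α`, which the
  -- reflection does not change; but then `-(reflAt α γ)` has a negative coefficient at `β`
  obtain ⟨β, hβ, hβα, hcβ⟩ : ∃ β ∈ R.simples, β ≠ α ∧ c β ≠ 0 := by
    by_contra! hb
    have hγα : γ = (c α : ℝ) • α := by
      rw [hc, Finset.sum_eq_single_of_mem α hα fun β hβ hβα => by simp [hb β hβ hβα]]
    rcases R.reduced α hαr _ (hγα ▸ R.pos_subset hγ) with h | h
    · exact hne (by rw [hγα, h, one_smul])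
    · linarith [(c α).cast_nonneg (α := ℝ)]
  have hsum : ∑ β ∈ R.simples, ((c β : ℝ) + d β) • β
      = ∑ β ∈ R.simples, (if β = α then copair α γ else 0) • β := by
    simp only [add_smul, Finset.sum_add_distrib, ← hc, ← hd, ite_smul, zero_smul,
      Finset.sum_ite_eq', if_pos hα, reflAt_apply]
    abel
  have hcoeff := R.coeff_eq_of_sum_eq hsum β hβ
  rw [if_neg hβα] at hcoeff
  exact hcβ (by exact_mod_cast (show (c β : ℝ) = 0 by linarith [(d β).cast_nonneg (α := ℝ)]))

lemma exists_simple_mem_of_isClosedSub_compl (hM : M ⊆ R.pos) (hne : M.Nonempty)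
    (hcompl : IsClosedSub R (R.pos \ M)) : ∃ α ∈ R.simples, α ∈ M := by
  obtain ⟨γ, hγM, hmin⟩ := Set.exists_min_image M R.ht (R.pos.finite_toSet.subset hM) hne
  by_contra! hnot
  have hγ : γ ∈ R.pos := hM hγM
  obtain ⟨α, hα, hsub⟩ := R.exists_simple_sub_mem_pos hγ (fun h => hnot γ h hγM)
  have hαp := R.simples_subset hα
  have hht := R.ht_add hαp hsub (by rwa [add_sub_cancel])
  rw [add_sub_cancel, R.ht_simple hα] at hht
  have hsubM : γ - α ∉ M := fun h => by linarith [hmin _ h]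
  have hroot : α + (γ - α) ∈ R.roots := by
    rw [add_sub_cancel]
    exact R.pos_subset hγ
  have hγcompl := hcompl α ⟨hαp, hnot α hα⟩ (γ - α) ⟨hsub, hsubM⟩ hroot
  rw [add_sub_cancel] at hγcompl
  exact hγcompl.2 hγM

lemma invSet_one : invSet R 1 = ∅ :=
  Set.eq_empty_of_forall_notMem fun γ hγ => R.pos_neg_disjoint γ hγ.1 hγ.2

lemma map_mem_pos_of_notMem_invSet {w : Function.End V} (hw : w ∈ weylGroup R) {γ : V}
    (hγ : γ ∈ R.pos) (h : γ ∉ invSet R w) : w γ ∈ R.pos :=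
  (R.pos_or_neg _ (R.map_mem_roots_of_mem_weylGroup hw (R.pos_subset hγ))).resolve_right
    fun hneg => h ⟨hγ, hneg⟩

lemma isClosedSub_invSet {w : Function.End V} (hw : w ∈ weylGroup R) :
    IsClosedSub R (invSet R w) := by
  rintro γ₁ ⟨h₁, h₁'⟩ γ₂ ⟨h₂, h₂'⟩ hsum
  have hadd := R.map_add_of_mem_weylGroup hw γ₁ γ₂
  have hroot : -(w γ₁) + -(w γ₂) ∈ R.roots := by
    rw [← neg_add, ← hadd]
    exact R.neg_mem _ (R.map_mem_roots_of_mem_weylGroup hw hsum)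
  refine ⟨R.add_mem_pos h₁ h₂ hsum, ?_⟩
  rw [hadd, neg_add]
  exact R.add_mem_pos h₁' h₂' hroot

lemma isClosedSub_pos_diff_invSet {w : Function.End V} (hw : w ∈ weylGroup R) :
    IsClosedSub R (R.pos \ invSet R w) := by
  rintro γ₁ ⟨h₁, h₁'⟩ γ₂ ⟨h₂, h₂'⟩ hsum
  have hadd := R.map_add_of_mem_weylGroup hw γ₁ γ₂
  have hroot : w γ₁ + w γ₂ ∈ R.roots := hadd ▸ R.map_mem_roots_of_mem_weylGroup hw hsum
  have hpos := R.add_mem_pos (R.map_mem_pos_of_notMem_invSet hw h₁ h₁')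
    (R.map_mem_pos_of_notMem_invSet hw h₂ h₂') hroot
  refine ⟨R.add_mem_pos h₁ h₂ hsum, fun hinv => ?_⟩
  exact R.pos_neg_disjoint _ hpos (hadd ▸ hinv.2)

lemma reflAt_simple_ne_of_mem_pos (hα : α ∈ R.simples) {γ : V} (hγ : γ ∈ R.pos) :
    reflAt α γ ≠ α := by
  have hα0 := R.ne_zero_of_mem_pos (R.simples_subset hα)
  intro h
  have : γ = -α := by rw [← reflAt_involutive hα0 γ, h, reflAt_self hα0]
  exact R.pos_neg_disjoint α (R.simples_subset hα) (this ▸ hγ)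

lemma mem_pos_of_reflAt_simple_mem_pos (hα : α ∈ R.simples) {γ : V}
    (h : reflAt α γ ∈ R.pos) (hne : reflAt α γ ≠ α) : γ ∈ R.pos :=
  reflAt_involutive (R.ne_zero_of_mem_pos (R.simples_subset hα)) γ ▸
    R.reflAt_simple_mem_pos hα h hne

lemma invSet_mul_reflAt_simple {w : Function.End V} (hw : w ∈ weylGroup R)
    (hα : α ∈ R.simples) (hwα : w α ∈ R.pos) :
    invSet R (w * reflAt α) = insert α (reflAt α ⁻¹' invSet R w) := by
  have hαp := R.simples_subset hα
  have hα0 := R.ne_zero_of_mem_pos hαp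
  ext γ
  by_cases hγα : γ = α
  · rw [hγα]
    refine iff_of_true ⟨hαp, ?_⟩ (Set.mem_insert α _)
    change -w (reflAt α α) ∈ R.pos
    rwa [reflAt_self hα0, R.map_neg_of_mem_weylGroup hw, neg_neg]
  · rw [Set.mem_insert_iff, or_iff_right hγα]
    refine and_congr_left fun hinv => ⟨fun h => R.reflAt_simple_mem_pos hα h hγα, fun h => ?_⟩
    refine R.mem_pos_of_reflAt_simple_mem_pos hα h fun heq => ?_
    exact R.pos_neg_disjoint _ hwα (heq ▸ hinv)

lemma reflAt_preimage_diff_subset_pos (hα : α ∈ R.simples) (hM : M ⊆ R.pos) :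
    reflAt α ⁻¹' (M \ {α}) ⊆ R.pos :=
  fun _ ⟨h, hne⟩ => R.mem_pos_of_reflAt_simple_mem_pos hα (hM h) hne

lemma isClosedSub_reflAt_preimage_diff (hα : α ∈ R.simples) (hM : M ⊆ R.pos)
    (hMc : IsClosedSub R M) : IsClosedSub R (reflAt α ⁻¹' (M \ {α})) := by
  have hαr := R.pos_subset (R.simples_subset hα)
  intro δ₁ h₁ δ₂ h₂ hsum
  have hpos := R.add_mem_pos (R.reflAt_preimage_diff_subset_pos hα hM h₁)
    (R.reflAt_preimage_diff_subset_pos hα hM h₂) hsum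
  have hroot : reflAt α δ₁ + reflAt α δ₂ ∈ R.roots :=
    reflAt_add α δ₁ δ₂ ▸ R.reflAt_mem_roots hsum hαr
  have hmem : reflAt α (δ₁ + δ₂) ∈ M := by
    rw [reflAt_add]
    exact hMc _ h₁.1 _ h₂.1 hroot
  exact ⟨hmem, R.reflAt_simple_ne_of_mem_pos hα hpos⟩

lemma isClosedSub_pos_diff_reflAt_preimage_diff (hα : α ∈ R.simples) (hαM : α ∈ M)
    (hMc : IsClosedSub R M) (hcompl : IsClosedSub R (↑R.pos \ M)) :
    IsClosedSub R (↑R.pos \ reflAt α ⁻¹' (M \ {α})) := by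
  have hαp := R.simples_subset hα
  have hα0 := R.ne_zero_of_mem_pos hαp
  have hcases : ∀ δ ∈ ↑R.pos \ reflAt α ⁻¹' (M \ {α}), δ = α ∨ reflAt α δ ∈ ↑R.pos \ M := by
    rintro δ ⟨hδ, hδM⟩
    refine or_iff_not_imp_left.mpr fun hδα => ⟨R.reflAt_simple_mem_pos hα hδ hδα, fun h => ?_⟩
    exact hδM ⟨h, R.reflAt_simple_ne_of_mem_pos hα hδ⟩
  -- `reflAt α (α + δ) ∈ M` would give `reflAt α δ = reflAt α (α + δ) + α ∈ M`
  have hmixed : ∀ δ, reflAt α δ ∈ ↑R.pos \ M → reflAt α (α + δ) ∉ M := by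
    rintro δ ⟨hδ, hδM⟩ h
    rw [reflAt_add, reflAt_self hα0] at h
    have := hMc _ h α hαM (by rw [neg_add_cancel_comm]; exact R.pos_subset hδ)
    rw [neg_add_cancel_comm] at this
    exact hδM this
  intro δ₁ h₁ δ₂ h₂ hsum
  refine ⟨R.add_mem_pos h₁.1 h₂.1 hsum, fun hmem => ?_⟩
  have hM : reflAt α (δ₁ + δ₂) ∈ M := hmem.1
  rcases hcases δ₁ h₁ with hδ₁ | h₁' <;> rcases hcases δ₂ h₂ with hδ₂ | h₂'
  · rw [hδ₁, hδ₂, ← two_smul ℝ] at hsum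
    rcases R.reduced α (R.pos_subset hαp) 2 hsum with h | h <;> norm_num at h
  · exact hmixed δ₂ h₂' (hδ₁ ▸ hM)
  · rw [hδ₂, add_comm] at hM
    exact hmixed δ₁ h₁' hM
  · rw [reflAt_add] at hM
    have hroot : reflAt α δ₁ + reflAt α δ₂ ∈ R.roots :=
      reflAt_add α δ₁ δ₂ ▸ R.reflAt_mem_roots hsum (R.pos_subset hαp)
    exact (hcompl _ h₁' _ h₂' hroot).2 hM

lemma exists_eq_invSet_of_isClosedSub (hM : M ⊆ R.pos) (hMc : IsClosedSub R M)
    (hcompl : IsClosedSub R (↑R.pos \ M)) : ∃ w ∈ weylGroup R, M = invSet R w := by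
  induction hn : M.ncard using Nat.strong_induction_on generalizing M with
  | _ n ih =>
  rcases M.eq_empty_or_nonempty with rfl | hne
  · exact ⟨1, one_mem _, R.invSet_one.symm⟩
  obtain ⟨α, hα, hαM⟩ := R.exists_simple_mem_of_isClosedSub_compl hM hne hcompl
  have hαp := R.simples_subset hα
  have hα0 := R.ne_zero_of_mem_pos hαp
  have hinv := reflAt_involutive hα0
  have hlt : (reflAt α ⁻¹' (M \ {α})).ncard < n := by
    rw [← hinv.image_eq_preimage_symm, Set.ncard_image_of_injective _ hinv.injective, ← hn]
    exact Set.ncard_sdiff_singleton_lt_of_mem hαM (R.pos.finite_toSet.subset hM)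
  obtain ⟨w, hw, hw'⟩ := ih _ hlt (R.reflAt_preimage_diff_subset_pos hα hM)
    (R.isClosedSub_reflAt_preimage_diff hα hM hMc)
    (R.isClosedSub_pos_diff_reflAt_preimage_diff hα hαM hMc hcompl) rfl
  have hwα : w α ∈ R.pos := by
    refine R.map_mem_pos_of_notMem_invSet hw hαp fun h => ?_
    have hneg : reflAt α α ∈ M := (hw' ▸ h).1
    rw [reflAt_self hα0] at hneg
    exact R.pos_neg_disjoint α hαp (hM hneg)
  refine ⟨w * reflAt α, mul_mem hw (R.reflAt_mem_weylGroup (R.pos_subset hαp)), ?_⟩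
  rw [R.invSet_mul_reflAt_simple hw hα hwα, ← hw', hinv.preimage, Set.insert_sdiff_singleton,
    Set.insert_eq_of_mem hαM]

end RootSystemData

theorem inversion_set_iff_closed_general (R : RootSystemData V)
    (M : Set V) (hM : M ⊆ ↑R.pos) :
    (∃ w ∈ weylGroup R, M = invSet R w) ↔
      IsClosedSub R M ∧ IsClosedSub R (↑R.pos \ M) := by
  constructor
  · rintro ⟨w, hw, rfl⟩
    exact ⟨R.isClosedSub_invSet hw, R.isClosedSub_pos_diff_invSet hw⟩
  · rintro ⟨hMc, hcompl⟩
    exact R.exists_eq_invSet_of_isClosedSub hM hMc hcompl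

/-- For an irreducible reduced crystallographic root system, a subset `M ⊆ Δ⁺` is the
inversion set `N(w)` of some Weyl group element `w` iff both `M` and `Δ⁺ \ M` are closed
under addition of roots. -/
theorem inversion_set_iff_closed (R : RootSystemData V) (hirr : R.Irreducible)
    (M : Set V) (hM : M ⊆ ↑R.pos) :
    (∃ w ∈ weylGroup R, M = invSet R w) ↔
      IsClosedSub R M ∧ IsClosedSub R (↑R.pos \ M) :=
  inversion_set_iff_closed_general R M hM
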